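/- arXiv:1812.11640 — 5 statements merged into one kernel-verified Lean document; each statement's English description precedes it below -/
import Mathlib

section
/- Let H be a finite simple graph and let φ be a nonnegative real-valued function on V(H). Then there exists an independent set I of H such that the total weight ∑_{v∈V(H)} φ(v) is at most ∑_{v∈I} φ(v)·(d_H(v)+1), where d_H(v) is the degree of v in H. -/
open Classical Finset

/-- An independent set of a simple graph: no edge joins two of its vertices. -/
def SimpleGraph.IsIndepFinset {V : Type*} (H : SimpleGraph V) (I : Finset V) : Prop :=
  ∀ v ∈ I, ∀ w ∈ I, ¬ H.Adj v w

/-!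
Greedy choice: take a vertex `v` of maximal weight, put it into `I`, delete its closed
neighbourhood `N[v]` and recurse. The deleted weight is at most `|N[v]| · φ(v) = φ(v)(d(v) + 1)`,
which is exactly what `v` contributes to the right-hand side.
-/

namespace SimpleGraph

variable {V : Type*} (H : SimpleGraph V)

theorem isIndepFinset_empty : H.IsIndepFinset ∅ := by
  simp [IsIndepFinset]

variable {H} in
theorem IsIndepFinset.insert {I : Finset V} {v : V} (hI : H.IsIndepFinset I)
    (hv : ∀ w ∈ I, ¬ H.Adj v w) : H.IsIndepFinset (insert v I) := by
  intro x hx y hy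
  rcases mem_insert.mp hx with rfl | hxI <;> rcases mem_insert.mp hy with rfl | hyI
  · exact H.irrefl
  · exact hv y hyI
  · exact fun h => hv x hxI h.symm
  · exact hI x hxI y hyI

variable [Fintype V]

noncomputable def closedNeighborFinset (v : V) : Finset V := insert v (H.neighborFinset v)

theorem card_closedNeighborFinset (v : V) : #(H.closedNeighborFinset v) = H.degree v + 1 := by
  rw [closedNeighborFinset, card_insert_of_notMem (by simp), card_neighborFinset_eq_degree]

theorem self_mem_closedNeighborFinset (v : V) : v ∈ H.closedNeighborFinset v :=
  mem_insert_self _ _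

theorem not_adj_of_notMem_closedNeighborFinset {v w : V} (hw : w ∉ H.closedNeighborFinset v) :
    ¬ H.Adj v w :=
  fun h => hw (mem_insert_of_mem ((H.mem_neighborFinset v w).mpr h))

theorem sum_inter_closedNeighborFinset_le {φ : V → ℝ} {S : Finset V} {v : V}
    (hmax : ∀ u ∈ S, φ u ≤ φ v) (hv : 0 ≤ φ v) :
    ∑ u ∈ S ∩ H.closedNeighborFinset v, φ u ≤ φ v * (H.degree v + 1) :=
  calc ∑ u ∈ S ∩ H.closedNeighborFinset v, φ u
      ≤ #(S ∩ H.closedNeighborFinset v) • φ v :=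
        sum_le_card_nsmul _ _ _ fun u hu => hmax u (mem_of_mem_inter_left hu)
    _ ≤ #(H.closedNeighborFinset v) • φ v :=
        nsmul_le_nsmul_left hv (card_le_card inter_subset_right)
    _ = φ v * (H.degree v + 1) := by
        rw [card_closedNeighborFinset, nsmul_eq_mul, mul_comm]
        push_cast
        ring

theorem exists_isIndepFinset_subset_sum_le {φ : V → ℝ} (hφ : ∀ v, 0 ≤ φ v) (S : Finset V) :
    ∃ I ⊆ S, H.IsIndepFinset I ∧ ∑ v ∈ S, φ v ≤ ∑ v ∈ I, φ v * (H.degree v + 1) := by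
  induction S using Finset.strongInduction with
  | H S ih =>
    rcases S.eq_empty_or_nonempty with rfl | hS
    · exact ⟨∅, subset_refl _, H.isIndepFinset_empty, by simp⟩
    obtain ⟨v, hvS, hmax⟩ := S.exists_max_image φ hS
    set N := H.closedNeighborFinset v
    have hrest : S \ N ⊂ S := (ssubset_iff_of_subset sdiff_subset).mpr
      ⟨v, hvS, fun h => (mem_sdiff.mp h).2 (H.self_mem_closedNeighborFinset v)⟩
    obtain ⟨I, hIS, hI, hsum⟩ := ih _ hrest
    have hIN : ∀ w ∈ I, w ∉ N := fun w hw => (mem_sdiff.mp (hIS hw)).2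
    have hvI : v ∉ I := fun h => hIN v h (H.self_mem_closedNeighborFinset v)
    refine ⟨insert v I, insert_subset hvS (hIS.trans sdiff_subset),
      hI.insert fun w hw => H.not_adj_of_notMem_closedNeighborFinset (hIN w hw), ?_⟩
    calc ∑ u ∈ S, φ u = ∑ u ∈ S ∩ N, φ u + ∑ u ∈ S \ N, φ u :=
          (sum_inter_add_sum_sdiff S N φ).symm
      _ ≤ φ v * (H.degree v + 1) + ∑ u ∈ I, φ u * (H.degree u + 1) :=
          add_le_add (H.sum_inter_closedNeighborFinset_le hmax (hφ v)) hsum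
      _ = ∑ u ∈ insert v I, φ u * (H.degree u + 1) := by rw [sum_insert hvI]

end SimpleGraph

/-- for any nonnegative weight function φ on a finite simple graph H,
there is an independent set I with ∑_{v} φ(v) ≤ ∑_{v ∈ I} φ(v)·(d_H(v)+1). -/
theorem weighted_independent_set {V : Type*} [Fintype V] (H : SimpleGraph V)
    (φ : V → ℝ) (hφ : ∀ v, 0 ≤ φ v) :
    ∃ I : Finset V, H.IsIndepFinset I ∧
      ∑ v, φ v ≤ ∑ v ∈ I, φ v * (H.degree v + 1) := by
  obtain ⟨I, -, hI, hsum⟩ := H.exists_isIndepFinset_subset_sum_le hφ univ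
  exact ⟨I, hI, hsum⟩
end

section
/- Let G be a finite simple graph that is r-tough (ω(G−S) ≤ max{1, |S|/r} for all S) and has order at least r+2, where r is a positive integer. Then for every S ⊆ V(G): iso(G−S) ≤ |S|/r, and (r−1)·w_*(G−S) + ω(G−S) ≤ |S| + 1, where w_*(G−S) is the number of components of G−S that are stars. -/
open Classical Finset

/-- The set of isolated vertices of `G − S`: vertices outside `S` all of whose
neighbors lie in `S`. -/
def SimpleGraph.isoVerts {V : Type*} (G : SimpleGraph V) (S : Finset V) : Set V :=
  {v | v ∉ S ∧ ∀ w, G.Adj v w → w ∈ S}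

/-- `iso(G − S)`, the number of isolated vertices of `G − S`. -/
noncomputable def SimpleGraph.isoCount {V : Type*} (G : SimpleGraph V) (S : Finset V) : ℕ :=
  (G.isoVerts S).ncard

/-- `ω(G − S)`, the number of connected components of `G − S`. -/
noncomputable def SimpleGraph.compCount {V : Type*} (G : SimpleGraph V) (S : Finset V) : ℕ :=
  Nat.card (G.induce ((↑S : Set V)ᶜ)).ConnectedComponent

/-- `G` is `t`-tough: `ω(G−S) ≤ max {1, |S|/t}` for all `S ⊆ V(G)`. -/
def SimpleGraph.IsTough {V : Type*} [Fintype V] (t : ℝ) (G : SimpleGraph V) : Prop :=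
  ∀ S : Finset V, (G.compCount S : ℝ) ≤ max 1 ((S.card : ℝ) / t)

/-- A connected component is a star if it has a center adjacent to every other vertex
of the component, and every other vertex has the center as its only neighbor
(singleton components count as stars). -/
def IsStarComponent {α : Type*} (G' : SimpleGraph α) (c : G'.ConnectedComponent) : Prop :=
  ∃ u ∈ c.supp, ∀ v ∈ c.supp, v ≠ u → G'.Adj u v ∧ ∀ w, G'.Adj v w → w = u

/-- `w_*(G − S)`: the number of star components of `G − S`. -/
noncomputable def SimpleGraph.starCompCount {V : Type*} (G : SimpleGraph V)
    (S : Finset V) : ℕ :=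
  {c : (G.induce ((↑S : Set V)ᶜ)).ConnectedComponent |
    IsStarComponent _ c}.ncard

/-- If `v` has no neighbors, anything reachable from `v` equals `v`. -/
lemma reachable_eq_of_isolated {α : Type*} {G' : SimpleGraph α} {v u : α}
    (hv : ∀ w, ¬ G'.Adj v w) (h : G'.Reachable v u) : u = v := by
  obtain ⟨p⟩ := h
  cases p with
  | nil => rfl
  | cons h _ => exact absurd h (hv _)

/-- in an `r`-tough graph of order at least `r + 2`, every `S ⊆ V(G)`
satisfies `iso(G−S) ≤ |S|/r` and `(r−1)·w_*(G−S) + ω(G−S) ≤ |S| + 1`. -/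
theorem tough_implies_iso_star_bounds {V : Type*} [Fintype V] (G : SimpleGraph V)
    (r : ℕ) (hr : 0 < r) (htough : G.IsTough r) (hcard : r + 2 ≤ Fintype.card V) :
    ∀ S : Finset V, (G.isoCount S : ℝ) ≤ (S.card : ℝ) / r ∧
      (r - 1) * G.starCompCount S + G.compCount S ≤ S.card + 1 := by
  intro S
  classical
  set Gs := G.induce ((↑S : Set V)ᶜ) with hGs
  have hrR : (0 : ℝ) < (r : ℝ) := by exact_mod_cast hr
  -- every isolated vertex of `G − S` is isolated in the induced graph
  have hisoG : ∀ (v : ((↑S : Set V)ᶜ : Set V)), (v : V) ∈ G.isoVerts S →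
      ∀ w, ¬ Gs.Adj v w := by
    intro v hv w hadj
    have hAdj : G.Adj (v : V) (w : V) := hadj
    exact w.2 (hv.2 _ hAdj)
  -- iso ≤ ω
  have hiso_le : G.isoCount S ≤ G.compCount S := by
    rw [SimpleGraph.isoCount, ← Nat.card_coe_set_eq]
    refine Nat.card_le_card_of_injective
      (fun v => Gs.connectedComponentMk ⟨v.1, v.2.1⟩) ?_
    intro a b hab
    have hrch := SimpleGraph.ConnectedComponent.exact hab
    have heq := reachable_eq_of_isolated (hisoG ⟨a.1, a.2.1⟩ a.2) hrch
    exact Subtype.ext ((congrArg Subtype.val heq).symm)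
  -- w ≤ ω
  have hw_le : G.starCompCount S ≤ G.compCount S := by
    rw [SimpleGraph.starCompCount, SimpleGraph.compCount, ← Set.ncard_univ]
    exact Set.ncard_le_ncard (Set.subset_univ _) Set.finite_univ
  have hto := le_max_iff.mp (htough S)
  rcases hto with hto | hto
  · -- ω ≤ 1
    have homega1 : G.compCount S ≤ 1 := by exact_mod_cast hto
    constructor
    · -- iso bound
      by_cases hiso0 : G.isoCount S = 0
      · rw [hiso0]
        push_cast
        positivity
      · -- there is an isolated vertex; then `Sᶜ = {v}`
        obtain ⟨v, hv⟩ := Set.nonempty_of_ncard_ne_zero hiso0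
        have hvS : (v : V) ∈ ((↑S : Set V)ᶜ) := hv.1
        have hsub : Subsingleton Gs.ConnectedComponent := by
          have hne : Nonempty Gs.ConnectedComponent :=
            ⟨Gs.connectedComponentMk ⟨v, hvS⟩⟩
          have hpos : 0 < G.compCount S := Nat.card_pos
          have : G.compCount S = 1 := le_antisymm homega1 hpos
          exact (Nat.card_eq_one_iff_unique.mp this).1
        -- every vertex outside S equals v
        have hcompl : ((↑S : Set V)ᶜ) ⊆ {v} := by
          intro x hx
          have : Gs.connectedComponentMk ⟨v, hvS⟩ = Gs.connectedComponentMk ⟨x, hx⟩ :=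
            Subsingleton.elim _ _
          have hrch := SimpleGraph.ConnectedComponent.exact this
          have heq := reachable_eq_of_isolated (hisoG ⟨v, hvS⟩ hv) hrch
          have : x = v := congrArg Subtype.val heq
          simpa using this
        -- card bound on S
        have hSc : (Sᶜ : Finset V) ⊆ {v} := by
          intro x hx
          have hx' : x ∈ ((↑S : Set V)ᶜ) := by
            simpa using (Finset.mem_compl.mp hx)
          simpa using hcompl hx'
        have hScard : Fintype.card V - S.card ≤ 1 := by
          have := Finset.card_le_card hSc
          simpa [Finset.card_compl] using this
        have hSbig : r + 1 ≤ S.card := by omega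
        -- iso ≤ 1
        have hisole : G.isoCount S ≤ 1 := by
          have hsub2 : G.isoVerts S ⊆ {v} := fun x hx => hcompl hx.1
          have := Set.ncard_le_ncard hsub2 (Set.finite_singleton v)
          rw [Set.ncard_singleton] at this
          exact this
        have h1 : (1 : ℝ) ≤ (S.card : ℝ) / r := by
          rw [one_le_div hrR]
          exact_mod_cast le_trans (Nat.le_succ r) hSbig
        calc (G.isoCount S : ℝ) ≤ 1 := by exact_mod_cast hisole
          _ ≤ (S.card : ℝ) / r := h1
    · -- star bound
      have hwle1 : G.starCompCount S ≤ 1 := le_trans hw_le homega1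
      rcases Nat.le_one_iff_eq_zero_or_eq_one.mp hwle1 with hw0 | hw1
      · rw [hw0]
        omega
      · -- exactly one star component, which is the whole of `G − S`
        have homega : G.compCount S = 1 := by
          have : 1 ≤ G.compCount S := hw1 ▸ hw_le
          omega
        rw [hw1, homega]
        by_contra hcon
        have hSsmall : S.card + 2 ≤ r := by omega
        -- get the star component and its center
        obtain ⟨c, hc⟩ := Set.nonempty_of_ncard_ne_zero
          (s := {c : Gs.ConnectedComponent | IsStarComponent _ c}) (by
            have : {c : Gs.ConnectedComponent | IsStarComponent _ c}.ncard = 1 := hw1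
            omega)
        obtain ⟨u, hu, hstar⟩ := hc
        have hsub : Subsingleton Gs.ConnectedComponent :=
          (Nat.card_eq_one_iff_unique.mp homega).1
        have huS : (u : V) ∉ S := u.2
        set T : Finset V := insert (u : V) S with hT
        have hTcard : T.card = S.card + 1 := Finset.card_insert_of_notMem huS
        -- every vertex outside T is isolated in `G − T`
        have hTiso : ∀ (x : ((↑T : Set V)ᶜ : Set V)) w,
            ¬ (G.induce ((↑T : Set V)ᶜ)).Adj x w := by
          intro x w hadj
          have hxT : (x : V) ∉ T := x.2
          have hwT : (w : V) ∉ T := w.2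
          have hxS : (x : V) ∉ S := fun h => hxT (Finset.mem_insert_of_mem h)
          have hwS : (w : V) ∉ S := fun h => hwT (Finset.mem_insert_of_mem h)
          have hxu : (x : V) ≠ (u : V) := fun h => hxT (h ▸ Finset.mem_insert_self _ _)
          have hwu : (w : V) ≠ (u : V) := fun h => hwT (h ▸ Finset.mem_insert_self _ _)
          set x' : ((↑S : Set V)ᶜ : Set V) := ⟨x, hxS⟩ with hx'
          set w' : ((↑S : Set V)ᶜ : Set V) := ⟨w, hwS⟩ with hw'
          have hx'supp : x' ∈ c.supp := by
            rw [SimpleGraph.ConnectedComponent.mem_supp_iff]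
            exact Subsingleton.elim _ _
          have hx'u : x' ≠ u := fun h => hxu (congrArg Subtype.val h)
          have hadj' : Gs.Adj x' w' := by
            have : G.Adj (x : V) (w : V) := hadj
            exact this
          have := ((hstar x' hx'supp hx'u).2 w' hadj')
          exact hwu (congrArg Subtype.val this)
        -- hence `G − T` has at least `|V| − |T|` components
        have hinj : Fintype.card V - T.card ≤ G.compCount T := by
          have h1 : Nat.card ((↑T : Set V)ᶜ : Set V) ≤ G.compCount T := by
            refine Nat.card_le_card_of_injective
              (fun x => (G.induce ((↑T : Set V)ᶜ)).connectedComponentMk x) ?_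
            intro a b hab
            have hrch := SimpleGraph.ConnectedComponent.exact hab
            exact (reachable_eq_of_isolated (hTiso a) hrch).symm
          have h2 : Nat.card ((↑T : Set V)ᶜ : Set V) = Fintype.card V - T.card := by
            rw [Nat.card_coe_set_eq, ← Finset.coe_compl, Set.ncard_coe_finset,
              Finset.card_compl]
          omega
        have h3 : 3 ≤ G.compCount T := by omega
        -- contradiction with toughness
        rcases le_max_iff.mp (htough T) with h | h
        · have : G.compCount T ≤ 1 := by exact_mod_cast h
          omega
        · have hmul : (G.compCount T : ℝ) * r ≤ T.card := by
            rwa [← le_div_iff₀ hrR]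
          have hmulN : G.compCount T * r ≤ T.card := by exact_mod_cast hmul
          have hbig : 3 * (S.card + 2) ≤ G.compCount T * r :=
            Nat.mul_le_mul h3 hSsmall
          omega
  · -- ω ≤ |S|/r
    have hmul : (G.compCount S : ℝ) * r ≤ S.card := by rwa [← le_div_iff₀ hrR]
    have hmulN : G.compCount S * r ≤ S.card := by exact_mod_cast hmul
    constructor
    · calc (G.isoCount S : ℝ) ≤ (G.compCount S : ℝ) := by exact_mod_cast hiso_le
        _ ≤ (S.card : ℝ) / r := hto
    · have h1 : (r - 1) * G.starCompCount S ≤ (r - 1) * G.compCount S :=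
        Nat.mul_le_mul_left _ hw_le
      have h2 : (r - 1) * G.compCount S + G.compCount S = r * G.compCount S := by
        have : 1 * G.compCount S ≤ r * G.compCount S :=
          Nat.mul_le_mul_right _ hr
        rw [Nat.sub_one_mul]
        omega
      have h3 : r * G.compCount S = G.compCount S * r := Nat.mul_comm _ _
      omega
end

section
/- Every graph with two edge-disjoint spanning trees has a spanning connected subgraph in which every vertex has even positive degree (a spanning Eulerian subgraph). -/
/-!
Let `S` be the set of odd-degree vertices of `T₁`; by the handshaking lemma `|S|` is even.
In the connected graph `T₂` every even vertex set is the odd-degree set of some subgraph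
`K ≤ T₂` (the symmetric difference of walks joining the vertices of `S` in pairs). As `T₁`
and `K` are edge-disjoint, `T₁ ⊔ K = T₁ ∆ K`, whose odd-degree set is `S ∆ S = ∅`; it is
connected because it contains the spanning tree `T₁`.
-/

open Classical Finset
open scoped symmDiff

namespace Finset

variable {α : Type*} [DecidableEq α]

theorem card_symmDiff_add_two_mul_card_inter (s t : Finset α) :
    #(s ∆ t) + 2 * #(s ∩ t) = #s + #t := by
  have hsd : #(s ∆ t) + #(s ∩ t) = #(s ∪ t) := by
    rw [symmDiff_eq_sup_sdiff_inf, sup_eq_union, inf_eq_inter,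
      card_sdiff_add_card_eq_card inter_subset_union]
  linarith [card_union_add_card_inter s t]

theorem even_card_symmDiff_iff (s t : Finset α) : Even #(s ∆ t) ↔ (Even #s ↔ Even #t) := by
  rw [← Nat.even_add, ← card_symmDiff_add_two_mul_card_inter]
  simp [Nat.even_add]

end Finset

namespace SimpleGraph

variable {V : Type*}

theorem neighborFinset_edge {u v : V} (huv : u ≠ v) (w : V)
    [Fintype ((edge u v).neighborSet w)] :
    (edge u v).neighborFinset w = if w = u then {v} else if w = v then {u} else ∅ := by
  ext x
  rw [mem_neighborFinset, edge_adj]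
  split_ifs <;> grind

namespace Walk

variable {G : SimpleGraph V}

/-- The edges traversed an odd number of times by the walk. -/
def parityGraph : ∀ {u v : V}, G.Walk u v → SimpleGraph V
  | _, _, nil => ⊥
  | u, _, cons (v := w) _ p => edge u w ∆ p.parityGraph

theorem parityGraph_le : ∀ {u v : V} (p : G.Walk u v), p.parityGraph ≤ G
  | _, _, nil => bot_le
  | _, _, cons h p =>
    symmDiff_le_sup.trans (sup_le ((edge_le_iff G).mpr (Or.inr h)) p.parityGraph_le)

end Walk

variable [Fintype V]

noncomputable def oddDegreeVerts (G : SimpleGraph V) : Finset V := {v | Odd (G.degree v)}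

@[simp]
theorem mem_oddDegreeVerts {G : SimpleGraph V} {v : V} :
    v ∈ G.oddDegreeVerts ↔ Odd (G.degree v) := by
  simp [oddDegreeVerts]

theorem oddDegreeVerts_eq_empty_iff {G : SimpleGraph V} :
    G.oddDegreeVerts = ∅ ↔ ∀ v, Even (G.degree v) := by
  simp [eq_empty_iff_forall_notMem]

@[simp]
theorem oddDegreeVerts_bot : (⊥ : SimpleGraph V).oddDegreeVerts = ∅ := by
  simp [oddDegreeVerts_eq_empty_iff]

theorem neighborFinset_symmDiff (G H : SimpleGraph V) (v : V) :
    (G ∆ H).neighborFinset v = G.neighborFinset v ∆ H.neighborFinset v := by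
  ext w
  rw [mem_symmDiff, mem_neighborFinset, mem_neighborFinset, mem_neighborFinset]
  simp [symmDiff_def]

theorem oddDegreeVerts_symmDiff (G H : SimpleGraph V) :
    (G ∆ H).oddDegreeVerts = G.oddDegreeVerts ∆ H.oddDegreeVerts := by
  ext v
  simp only [mem_oddDegreeVerts, mem_symmDiff, ← card_neighborFinset_eq_degree,
    neighborFinset_symmDiff, ← Nat.not_even_iff_odd, even_card_symmDiff_iff]
  tauto

theorem oddDegreeVerts_edge {u v : V} (huv : u ≠ v) :
    (edge u v).oddDegreeVerts = {u} ∆ {v} := by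
  ext w
  rw [mem_oddDegreeVerts, ← card_neighborFinset_eq_degree, neighborFinset_edge huv]
  split_ifs <;> simp_all [mem_symmDiff]

theorem Walk.oddDegreeVerts_parityGraph {G : SimpleGraph V} :
    ∀ {u v : V} (p : G.Walk u v), p.parityGraph.oddDegreeVerts = {u} ∆ {v}
  | _, _, nil => by simp [parityGraph]
  | _, _, cons h p => by
    rw [parityGraph, oddDegreeVerts_symmDiff, oddDegreeVerts_edge h.ne,
      oddDegreeVerts_parityGraph p, symmDiff_assoc, symmDiff_symmDiff_cancel_left]

theorem Connected.exists_le_oddDegreeVerts_eq {G : SimpleGraph V} (hG : G.Connected)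
    (S : Finset V) (hS : Even #S) : ∃ K ≤ G, K.oddDegreeVerts = S := by
  induction S using Finset.strongInduction with
  | H S ih =>
  obtain rfl | ⟨a, ha⟩ := S.eq_empty_or_nonempty
  · exact ⟨⊥, bot_le, oddDegreeVerts_bot⟩
  obtain ⟨k, hk⟩ := hS
  have hSa : 0 < #(S.erase a) := by
    have := card_pos.mpr ⟨a, ha⟩
    rw [card_erase_of_mem ha]
    omega
  obtain ⟨b, hb⟩ := card_pos.mp hSa
  obtain ⟨K, hKG, hK⟩ := ih ((S.erase a).erase b)
    ((erase_ssubset hb).trans (erase_ssubset ha))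
    ⟨k - 1, by rw [card_erase_of_mem hb, card_erase_of_mem ha]; omega⟩
  obtain ⟨p⟩ := hG.preconnected a b
  refine ⟨K ∆ p.parityGraph, symmDiff_le_sup.trans (sup_le hKG p.parityGraph_le), ?_⟩
  rw [oddDegreeVerts_symmDiff, hK, p.oddDegreeVerts_parityGraph]
  ext x
  simp only [mem_symmDiff, mem_erase, mem_singleton]
  grind

end SimpleGraph

open SimpleGraph in
/-- Jaeger: every graph with two edge-disjoint spanning trees has a
spanning Eulerian subgraph: a connected spanning subgraph with all degrees even
(and positive whenever the graph has at least two vertices). -/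
theorem spanning_eulerian_of_two_trees {V : Type*} [Fintype V] (G : SimpleGraph V)
    (T₁ T₂ : SimpleGraph V) (h₁ : T₁ ≤ G) (h₂ : T₂ ≤ G)
    (ht₁ : T₁.IsTree) (ht₂ : T₂.IsTree) (hdisj : Disjoint T₁.edgeSet T₂.edgeSet) :
    ∃ H : SimpleGraph V, H ≤ G ∧ H.Connected ∧ (∀ v, Even (H.degree v)) ∧
      (2 ≤ Fintype.card V → ∀ v, 0 < H.degree v) := by
  obtain ⟨K, hKT₂, hK⟩ :=
    ht₂.connected.exists_le_oddDegreeVerts_eq T₁.oddDegreeVerts T₁.even_card_odd_degree_vertices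
  have hT₁K : Disjoint T₁ K := (disjoint_edgeSet.mp hdisj).mono_right hKT₂
  have hconn : (T₁ ⊔ K).Connected := ht₁.connected.mono le_sup_left
  refine ⟨T₁ ⊔ K, sup_le h₁ (hKT₂.trans h₂), hconn, ?_, fun hV v => ?_⟩
  · rw [← oddDegreeVerts_eq_empty_iff, ← hT₁K.symmDiff_eq_sup, oddDegreeVerts_symmDiff, hK,
      symmDiff_self, bot_eq_empty]
  · have : Nontrivial V := Fintype.one_lt_card_iff_nontrivial.mp hV
    convert hconn.preconnected.degree_pos_of_nontrivial v
end

section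
/- Every f(f+1)-iso-tough graph G admits an (f, f+1)-factor, where f is a nonnegative integer-valued function on V(G); i.e., if for all S ⊆ V(G), ∑_{v isolated in G−S} f(v)(f(v)+1) ≤ |S|, then G has a spanning subgraph F with f(v) ≤ d_F(v) ≤ f(v)+1 for all v. -/
/-!
Take a set `A` of edges of `G` with all degrees at most `f + 1` that minimises the deficiency
`∑ v, (f v - d_A v)`. If some vertex `u` is still deficient, switching `A` along an alternating trail
from `u` cannot lower the deficiency, so the ends of odd alternating trails are saturated
(`d_A = f + 1`) and the ends of even ones are not (`d_A ≤ f`). Double counting the edges of `A` at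
these two sets `S` and `T` gives Lovász's obstruction `∑_T d_{G-S} + ∑_S (f + 1) < ∑_T f`.

On the other hand, choosing vertices of `T` greedily by largest `f` yields an independent set
`I ⊆ T` with `∑_T (f - d_{G-S}) ≤ ∑_I (f (f + 1) - d_{G-S})`. Deleting `S` and the neighbours of `I`
outside `S` isolates `I`, so `f (f + 1)`-iso-toughness bounds the right-hand side by `|S|`,
contradicting the obstruction.
-/

open Classical Finset

namespace SimpleGraph

variable {V : Type*}

noncomputable def edgeDeg (A : Finset (Sym2 V)) (v : V) : ℕ := #{e ∈ A | v ∈ e}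

lemma edgeDeg_insert_mk {A : Finset (Sym2 V)} {a b : V} (hab : a ≠ b) (he : s(a, b) ∉ A)
    (v : V) :
    edgeDeg (insert s(a, b) A) v =
      edgeDeg A v + (if v = a then 1 else 0) + if v = b then 1 else 0 := by
  unfold edgeDeg
  rw [filter_insert]
  by_cases hv : v ∈ s(a, b)
  · rw [if_pos hv, card_insert_of_notMem fun h => he (mem_filter.1 h).1]
    rcases Sym2.mem_iff.1 hv with rfl | rfl <;> simp [hab, hab.symm]
  · rw [if_neg hv]
    simp only [Sym2.mem_iff, not_or] at hv
    simp [hv.1, hv.2]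

lemma edgeDeg_erase_mk {A : Finset (Sym2 V)} {a b : V} (hab : a ≠ b) (he : s(a, b) ∈ A) (v : V) :
    edgeDeg (A.erase s(a, b)) v + (if v = a then 1 else 0) + (if v = b then 1 else 0) =
      edgeDeg A v := by
  rw [← edgeDeg_insert_mk hab (notMem_erase _ A), insert_erase he]

/-- `AltTrail G A u even B t`: there is a trail in `G` from `u` to `t`, alternating between
edges outside and inside `A` and starting outside `A`, of even length iff `even`, and `B` is `A`
with the edges of the trail switched. -/
inductive AltTrail (G : SimpleGraph V) (A : Finset (Sym2 V)) (u : V) :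
    Bool → Finset (Sym2 V) → V → Prop
  | nil : AltTrail G A u true A u
  | cons_out {B : Finset (Sym2 V)} {t w : V} : AltTrail G A u true B t → G.Adj t w →
      s(t, w) ∉ A → s(t, w) ∉ B → AltTrail G A u false (insert s(t, w) B) w
  | cons_in {B : Finset (Sym2 V)} {w x : V} : AltTrail G A u false B w → s(w, x) ∈ A →
      s(w, x) ∈ B → AltTrail G A u true (B.erase s(w, x)) x

namespace AltTrail

variable {G : SimpleGraph V} {A B : Finset (Sym2 V)} {u t : V} {even : Bool}

lemma subset_edgeSet (hA : ↑A ⊆ G.edgeSet) (hB : AltTrail G A u even B t) : ↑B ⊆ G.edgeSet := by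
  induction hB with
  | nil => exact hA
  | cons_out _ hadj _ _ ih =>
    intro e he
    obtain rfl | he := mem_insert.1 he
    exacts [hadj, ih he]
  | cons_in _ _ _ ih => exact fun e he => ih (mem_of_mem_erase he)

lemma edgeDeg_eq (hA : ↑A ⊆ G.edgeSet) (hB : AltTrail G A u even B t) (v : V) :
    (edgeDeg B v : ℤ) =
      edgeDeg A v + (if v = u then 1 else 0) + if v = t then (if even then -1 else 1) else 0 := by
  induction hB generalizing v with
  | nil => simp only [↓reduceIte]; split_ifs <;> omega
  | @cons_out B t w _ hadj _ hnB ih =>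
    rw [edgeDeg_insert_mk hadj.ne hnB]
    push_cast
    rw [ih]
    simp only [↓reduceIte]
    split_ifs <;> omega
  | @cons_in B w x _ hA' hB' ih =>
    have h := edgeDeg_erase_mk (hA hA').ne hB' v
    rw [← Nat.cast_inj (R := ℤ)] at h
    push_cast at h
    rw [ih] at h
    simp only [Bool.false_eq_true, ↓reduceIte] at h ⊢
    split_ifs at h ⊢ <;> omega

lemma exists_odd_of_mem_sdiff (hB : AltTrail G A u even B t) {e : Sym2 V} (he : e ∈ B \ A) :
    ∃ w ∈ e, ∃ B', AltTrail G A u false B' w := by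
  induction hB with
  | nil => simp at he
  | cons_out hB hadj hnA hnB ih =>
    obtain rfl | he' := mem_insert.1 (mem_sdiff.1 he).1
    · exact ⟨_, Sym2.mem_mk_right _ _, _, hB.cons_out hadj hnA hnB⟩
    · exact ih (mem_sdiff.2 ⟨he', (mem_sdiff.1 he).2⟩)
  | cons_in _ _ _ ih => exact ih (sdiff_subset_sdiff (erase_subset _ _) le_rfl he)

lemma exists_even_of_mem_sdiff (hB : AltTrail G A u even B t) {e : Sym2 V} (he : e ∈ A \ B) :
    ∃ x ∈ e, ∃ B', AltTrail G A u true B' x := by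
  induction hB with
  | nil => simp at he
  | cons_out _ _ _ _ ih => exact ih (sdiff_subset_sdiff le_rfl (subset_insert _ _) he)
  | @cons_in B w x hB hA' hB' ih =>
    by_cases he' : e = s(w, x)
    · subst he'
      exact ⟨_, Sym2.mem_mk_right _ _, _, hB.cons_in hA' hB'⟩
    · exact ih (mem_sdiff.2 ⟨(mem_sdiff.1 he).1, fun h => (mem_sdiff.1 he).2 (mem_erase.2 ⟨he', h⟩)⟩)

end AltTrail

def IsPartialFactor (G : SimpleGraph V) (f : V → ℕ) (A : Finset (Sym2 V)) : Prop :=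
  ↑A ⊆ G.edgeSet ∧ ∀ v, edgeDeg A v ≤ f v + 1

noncomputable def deficiency [Fintype V] (f : V → ℕ) (A : Finset (Sym2 V)) : ℕ :=
  ∑ v, (f v - edgeDeg A v)

section MinDeficiency

variable [Fintype V] {G : SimpleGraph V} {f : V → ℕ} {A B : Finset (Sym2 V)} {u w : V}

lemma deficiency_lt (hle : ∀ v, f v - edgeDeg B v ≤ f v - edgeDeg A v) (hu : edgeDeg A u < f u)
    (hAB : edgeDeg A u < edgeDeg B u) : deficiency f B < deficiency f A :=
  sum_lt_sum (fun v _ => hle v) ⟨u, mem_univ u, by omega⟩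

variable (hA : IsPartialFactor G f A)
  (hmin : ∀ B, IsPartialFactor G f B → deficiency f A ≤ deficiency f B) (hu : edgeDeg A u < f u)
include hA hmin hu

-- Otherwise switching `A` along the trail would give a partial factor of smaller deficiency.
lemma AltTrail.edgeDeg_eq_of_odd (hB : AltTrail G A u false B w) : edgeDeg A w = f w + 1 := by
  by_contra hw
  have hw : edgeDeg A w ≤ f w := by have := hA.2 w; omega
  have hdeg := hB.edgeDeg_eq hA.1
  simp only [Bool.false_eq_true, ↓reduceIte] at hdeg
  have hB' : IsPartialFactor G f B := ⟨hB.subset_edgeSet hA.1, fun v => by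
    have := hdeg v; have := hA.2 v; split_ifs at * <;> subst_vars <;> omega⟩
  refine not_lt_of_ge (hmin B hB') (deficiency_lt (fun v => ?_) hu ?_)
  · have := hdeg v; split_ifs at this <;> omega
  · have := hdeg u; simp only [↓reduceIte] at this; split_ifs at this <;> omega

lemma AltTrail.edgeDeg_le_of_even (hB : AltTrail G A u true B w) : edgeDeg A w ≤ f w := by
  by_contra hw
  have hw : edgeDeg A w = f w + 1 := by have := hA.2 w; omega
  have hwu : w ≠ u := by rintro rfl; omega
  have hdeg := hB.edgeDeg_eq hA.1
  simp only [↓reduceIte] at hdeg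
  have hB' : IsPartialFactor G f B := ⟨hB.subset_edgeSet hA.1, fun v => by
    have := hdeg v; have := hA.2 v; split_ifs at * <;> subst_vars <;> omega⟩
  refine not_lt_of_ge (hmin B hB') (deficiency_lt (fun v => ?_) hu ?_)
  · have := hdeg v; split_ifs at this <;> subst_vars <;> omega
  · have := hdeg u; simp only [↓reduceIte, hwu.symm] at this; omega

end MinDeficiency

section Counting

variable [Fintype V] {G : SimpleGraph V} {A : Finset (Sym2 V)} {S T : Finset V}

noncomputable def degOutside (G : SimpleGraph V) (S : Finset V) (v : V) : ℕ :=
  #{w | G.Adj v w ∧ w ∉ S}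

lemma card_filter_avoiding_add_le (hST : Disjoint S T) (hS : ∀ s ∈ S, ∀ y, s(s, y) ∈ A → y ∈ T)
    {e : Sym2 V} (he : e ∈ A) :
    #{t ∈ T | t ∈ e ∧ ∀ s ∈ S, s ∉ e} + #{s ∈ S | s ∈ e} ≤ #{t ∈ T | t ∈ e} := by
  by_cases hmeet : ∃ a ∈ S, a ∈ e
  · obtain ⟨a, haS, hae⟩ := hmeet
    obtain ⟨b, rfl⟩ := Sym2.mem_iff_exists.1 hae
    have hbT : b ∈ T := hS a haS b he
    have h0 : #{t ∈ T | t ∈ s(a, b) ∧ ∀ s ∈ S, s ∉ s(a, b)} = 0 :=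
      card_eq_zero.2 (filter_eq_empty_iff.2 fun _ _ h => h.2 a haS hae)
    have h1 : #{s ∈ S | s ∈ s(a, b)} ≤ 1 := by
      refine card_le_one.2 fun x hx y hy => ?_
      simp only [mem_filter, Sym2.mem_iff] at hx hy
      have hbS : b ∉ S := disjoint_right.1 hST hbT
      rcases hx with ⟨hx, rfl | rfl⟩ <;> rcases hy with ⟨hy, rfl | rfl⟩ <;> first | rfl | contradiction
    have h2 : 1 ≤ #{t ∈ T | t ∈ s(a, b)} :=
      card_pos.2 ⟨b, mem_filter.2 ⟨hbT, Sym2.mem_mk_right a b⟩⟩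
    omega
  · push Not at hmeet
    rw [card_eq_zero.2 (filter_eq_empty_iff.2 hmeet), add_zero]
    exact card_le_card fun t ht => mem_filter.2 ⟨(mem_filter.1 ht).1, (mem_filter.1 ht).2.1⟩

lemma sum_degOutside_add_sum_edgeDeg_le (hST : Disjoint S T)
    (hT : ∀ t ∈ T, ∀ y, G.Adj t y → y ∉ S → s(t, y) ∈ A)
    (hS : ∀ s ∈ S, ∀ y, s(s, y) ∈ A → y ∈ T) :
    ∑ t ∈ T, G.degOutside S t + ∑ s ∈ S, edgeDeg A s ≤ ∑ t ∈ T, edgeDeg A t := by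
  have hout : ∀ t ∈ T, G.degOutside S t ≤ #{e ∈ A | t ∈ e ∧ ∀ s ∈ S, s ∉ e} := by
    intro t ht
    refine card_le_card_of_injOn (fun y => s(t, y)) (fun y hy => ?_)
      fun y₁ _ y₂ _ h => Sym2.congr_right.1 h
    simp only [coe_filter, Set.mem_ofPred_eq, mem_univ, true_and] at hy ⊢
    refine ⟨hT t ht y hy.1 hy.2, Sym2.mem_mk_left t y, fun s hs hse => ?_⟩
    rcases Sym2.mem_iff.1 hse with rfl | rfl
    exacts [Finset.disjoint_left.1 hST hs ht, hy.2 hs]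
  calc ∑ t ∈ T, G.degOutside S t + ∑ s ∈ S, edgeDeg A s
      ≤ ∑ t ∈ T, #{e ∈ A | t ∈ e ∧ ∀ s ∈ S, s ∉ e} + ∑ s ∈ S, edgeDeg A s := by
        gcongr with t ht; exact hout t ht
    _ = ∑ e ∈ A, (#{t ∈ T | t ∈ e ∧ ∀ s ∈ S, s ∉ e} + #{s ∈ S | s ∈ e}) := by
        rw [sum_add_distrib]
        congr 1 <;> exact sum_card_bipartiteAbove_eq_sum_card_bipartiteBelow _
    _ ≤ ∑ e ∈ A, #{t ∈ T | t ∈ e} := sum_le_sum fun e he => card_filter_avoiding_add_le hST hS he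
    _ = ∑ t ∈ T, edgeDeg A t := (sum_card_bipartiteAbove_eq_sum_card_bipartiteBelow _).symm

end Counting

section Barrier

variable [Fintype V] {G : SimpleGraph V} {f : V → ℕ} {A : Finset (Sym2 V)} {u : V}

noncomputable def oddReach (G : SimpleGraph V) (A : Finset (Sym2 V)) (u : V) : Finset V :=
  {w | ∃ B, AltTrail G A u false B w}

noncomputable def evenReach (G : SimpleGraph V) (A : Finset (Sym2 V)) (u : V) : Finset V :=
  {w | ∃ B, AltTrail G A u true B w}

lemma mem_oddReach {w : V} : w ∈ G.oddReach A u ↔ ∃ B, AltTrail G A u false B w := by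
  simp [oddReach]

lemma mem_evenReach {w : V} : w ∈ G.evenReach A u ↔ ∃ B, AltTrail G A u true B w := by
  simp [evenReach]

variable (hreach : Disjoint (G.oddReach A u) (G.evenReach A u))
include hreach

lemma mk_mem_of_mem_evenReach {t y : V} (ht : t ∈ G.evenReach A u) (hty : G.Adj t y)
    (hy : y ∉ G.oddReach A u) : s(t, y) ∈ A := by
  obtain ⟨B, hB⟩ := mem_evenReach.1 ht
  by_contra hnA
  by_cases hnB : s(t, y) ∈ B
  · obtain ⟨w, hw, hw'⟩ := hB.exists_odd_of_mem_sdiff (mem_sdiff.2 ⟨hnB, hnA⟩)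
    rcases Sym2.mem_iff.1 hw with rfl | rfl
    exacts [Finset.disjoint_left.1 hreach (mem_oddReach.2 hw') ht, hy (mem_oddReach.2 hw')]
  · exact hy (mem_oddReach.2 ⟨_, hB.cons_out hty hnA hnB⟩)

lemma mem_evenReach_of_mk_mem {s y : V} (hs : s ∈ G.oddReach A u) (he : s(s, y) ∈ A) :
    y ∈ G.evenReach A u := by
  obtain ⟨B, hB⟩ := mem_oddReach.1 hs
  by_cases hnB : s(s, y) ∈ B
  · exact mem_evenReach.2 ⟨_, hB.cons_in he hnB⟩
  · obtain ⟨x, hx, hx'⟩ := hB.exists_even_of_mem_sdiff (mem_sdiff.2 ⟨he, hnB⟩)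
    rcases Sym2.mem_iff.1 hx with rfl | rfl
    exacts [absurd (mem_evenReach.2 hx') (Finset.disjoint_left.1 hreach hs), mem_evenReach.2 hx']

end Barrier

/-- Lovász's obstruction to an `(f, f + 1)`-factor. -/
def IsBarrier [Fintype V] (G : SimpleGraph V) (f : V → ℕ) (S T : Finset V) : Prop :=
  Disjoint S T ∧ ∑ t ∈ T, G.degOutside S t + ∑ s ∈ S, (f s + 1) < ∑ t ∈ T, f t

theorem exists_isBarrier_of_deficiency_minimal [Fintype V] {G : SimpleGraph V} {f : V → ℕ}
    {A : Finset (Sym2 V)} {u : V} (hA : IsPartialFactor G f A)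
    (hmin : ∀ B, IsPartialFactor G f B → deficiency f A ≤ deficiency f B)
    (hu : edgeDeg A u < f u) : ∃ S T, G.IsBarrier f S T := by
  have hS : ∀ s ∈ G.oddReach A u, edgeDeg A s = f s + 1 := fun s hs =>
    (mem_oddReach.1 hs).choose_spec.edgeDeg_eq_of_odd hA hmin hu
  have hT : ∀ t ∈ G.evenReach A u, edgeDeg A t ≤ f t := fun t ht =>
    (mem_evenReach.1 ht).choose_spec.edgeDeg_le_of_even hA hmin hu
  have hreach : Disjoint (G.oddReach A u) (G.evenReach A u) :=
    Finset.disjoint_left.2 fun v hvS hvT => by have := hS v hvS; have := hT v hvT; omega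
  refine ⟨_, _, hreach, ?_⟩
  calc ∑ t ∈ G.evenReach A u, G.degOutside (G.oddReach A u) t + ∑ s ∈ G.oddReach A u, (f s + 1)
      = ∑ t ∈ G.evenReach A u, G.degOutside (G.oddReach A u) t
          + ∑ s ∈ G.oddReach A u, edgeDeg A s := by rw [sum_congr rfl hS]
    _ ≤ ∑ t ∈ G.evenReach A u, edgeDeg A t :=
      sum_degOutside_add_sum_edgeDeg_le hreach
        (fun _ ht _ hty hy => mk_mem_of_mem_evenReach hreach ht hty hy)
        (fun _ hs _ he => mem_evenReach_of_mk_mem hreach hs he)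
    _ < ∑ t ∈ G.evenReach A u, f t := sum_lt_sum hT ⟨u, mem_evenReach.2 ⟨A, .nil⟩, hu⟩

section IsoTough

variable [Fintype V] {G : SimpleGraph V} {f : V → ℕ} {S T : Finset V}

lemma card_adj_le_degOutside (hST : Disjoint S T) (v : V) :
    #{y ∈ T | G.Adj v y} ≤ G.degOutside S v :=
  card_le_card fun y hy => by
    simp only [mem_filter, mem_univ, true_and] at hy ⊢
    exact ⟨hy.2, Finset.disjoint_right.1 hST hy.1⟩

lemma exists_isIndepSet_sum_le (hST : Disjoint S T) (hT : ∀ t ∈ T, G.degOutside S t ≤ f t) :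
    ∃ I ⊆ T, G.IsIndepSet ↑I ∧ ∑ t ∈ T, ((f t : ℤ) - G.degOutside S t) ≤
      ∑ t ∈ I, ((f t : ℤ) * (f t + 1) - G.degOutside S t) := by
  induction T using Finset.strongInduction with
  | H T ih =>
  rcases T.eq_empty_or_nonempty with rfl | hne
  · exact ⟨∅, empty_subset _, by simp, by simp⟩
  obtain ⟨t₀, ht₀, hmax⟩ := T.exists_max_image f hne
  set N : Finset V := {y ∈ T | G.Adj t₀ y}
  have hN : N ⊆ T.erase t₀ := fun y hy =>
    mem_erase.2 ⟨(G.ne_of_adj (mem_filter.1 hy).2).symm, (mem_filter.1 hy).1⟩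
  have hrest : T.erase t₀ \ N ⊆ T := sdiff_subset.trans (erase_subset _ _)
  obtain ⟨I, hIT, hI, hsum⟩ := ih (T.erase t₀ \ N)
    (sdiff_subset.trans_ssubset (erase_ssubset ht₀)) (hST.mono_right hrest)
    fun t ht => hT t (hrest ht)
  have ht₀I : t₀ ∉ I := fun h => by simpa using hIT h
  refine ⟨insert t₀ I, insert_subset ht₀ (hIT.trans hrest), ?_, ?_⟩
  · rw [coe_insert, isIndepSet_iff, Set.pairwise_insert_of_notMem (mem_coe.not.2 ht₀I)]
    refine ⟨hI, fun y hy => ?_⟩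
    have hyN : y ∉ N := (mem_sdiff.1 (hIT hy)).2
    have hyT : y ∈ T := hrest (hIT hy)
    exact ⟨fun h => hyN (mem_filter.2 ⟨hyT, h⟩), fun h => hyN (mem_filter.2 ⟨hyT, h.symm⟩)⟩
  · -- `t₀` has at most `f t₀` neighbours in `T`, each contributing at most `f t₀` by maximality.
    have hNsum : ∑ y ∈ N, ((f y : ℤ) - G.degOutside S y) ≤ f t₀ * f t₀ :=
      calc ∑ y ∈ N, ((f y : ℤ) - G.degOutside S y)
          ≤ ∑ _y ∈ N, (f t₀ : ℤ) := sum_le_sum fun y hy => by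
            have := hmax y (mem_filter.1 hy).1; omega
        _ = #N * f t₀ := by simp
        _ ≤ f t₀ * f t₀ := by
            gcongr
            exact_mod_cast (card_adj_le_degOutside hST t₀).trans (hT t₀ ht₀)
    calc ∑ t ∈ T, ((f t : ℤ) - G.degOutside S t)
        = (f t₀ - G.degOutside S t₀) + (∑ t ∈ T.erase t₀ \ N, ((f t : ℤ) - G.degOutside S t)
            + ∑ y ∈ N, ((f y : ℤ) - G.degOutside S y)) := by
          rw [sum_sdiff hN]; exact (add_sum_erase _ _ ht₀).symm
      _ ≤ (f t₀ - G.degOutside S t₀) + (∑ t ∈ I, ((f t : ℤ) * (f t + 1) - G.degOutside S t)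
            + f t₀ * f t₀) := by gcongr
      _ = ∑ t ∈ insert t₀ I, ((f t : ℤ) * (f t + 1) - G.degOutside S t) := by
          rw [sum_insert ht₀I]; ring


def IsIsoTough (G : SimpleGraph V) (w : V → ℕ) : Prop :=
  ∀ S : Finset V, ∑ v ∈ Finset.univ.filter (fun v => v ∈ G.isoVerts S), w v ≤ S.card

lemma IsIsoTough.sum_le_card {w : V → ℕ} (h : G.IsIsoTough w) {I W : Finset V}
    (hI : ∀ v ∈ I, v ∈ G.isoVerts W) : ∑ v ∈ I, w v ≤ #W :=
  (sum_le_sum_of_subset fun v hv => mem_filter.2 ⟨mem_univ v, hI v hv⟩).trans (h W)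

lemma IsIndepSet.mem_isoVerts_union_biUnion {I : Finset V} (hI : G.IsIndepSet ↑I)
    (hSI : Disjoint S I) {t : V} (ht : t ∈ I) :
    t ∈ G.isoVerts (S ∪ I.biUnion fun t => {y | G.Adj t y ∧ y ∉ S}) := by
  refine ⟨fun h => ?_, fun y hty => ?_⟩
  · rcases mem_union.1 h with h | h
    · exact Finset.disjoint_left.1 hSI h ht
    · obtain ⟨t', ht', hadj⟩ := mem_biUnion.1 h
      exact hI ht' ht (G.ne_of_adj (mem_filter.1 hadj).2.1) (mem_filter.1 hadj).2.1
  · by_cases hyS : y ∈ S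
    · exact mem_union_left _ hyS
    · exact mem_union_right _ (mem_biUnion.2 ⟨t, ht, mem_filter.2 ⟨mem_univ y, hty, hyS⟩⟩)

lemma card_union_biUnion_le (I : Finset V) :
    #(S ∪ I.biUnion fun t => {y | G.Adj t y ∧ y ∉ S}) ≤ #S + ∑ t ∈ I, G.degOutside S t :=
  (card_union_le _ _).trans (Nat.add_le_add_left card_biUnion_le _)

theorem IsIsoTough.not_isBarrier (h : G.IsIsoTough fun v => f v * (f v + 1)) (S T : Finset V) :
    ¬G.IsBarrier f S T := by
  rintro ⟨hST, hlt⟩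
  obtain ⟨I, hIT, hI, hsum⟩ := exists_isIndepSet_sum_le (G := G) (f := f)
    (hST.mono_right (filter_subset (fun t => G.degOutside S t ≤ f t) T))
    fun t ht => (mem_filter.1 ht).2
  have hiso : ∑ t ∈ I, f t * (f t + 1) ≤ #S + ∑ t ∈ I, G.degOutside S t :=
    (h.sum_le_card fun t ht =>
      hI.mem_isoVerts_union_biUnion (hST.mono_right (hIT.trans (filter_subset _ _))) ht).trans
      (card_union_biUnion_le I)
  have hfilter : ∑ t ∈ T, ((f t : ℤ) - G.degOutside S t) ≤
      ∑ t ∈ T with G.degOutside S t ≤ f t, ((f t : ℤ) - G.degOutside S t) :=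
    sum_le_sum_of_subset_of_nonpos' (filter_subset _ _) fun t htT ht => by
      have : f t < G.degOutside S t := by simpa [htT] using ht
      omega
  have hS : (#S : ℤ) ≤ ∑ s ∈ S, ((f s : ℤ) + 1) := by
    rw [card_eq_sum_ones, Nat.cast_sum]
    exact sum_le_sum fun s _ => by simp
  have key := hfilter.trans hsum
  simp only [sum_sub_distrib] at key
  zify at hlt hiso
  linarith

end IsoTough

lemma degree_fromEdgeSet [Fintype V] {A : Finset (Sym2 V)} (hA : ∀ e ∈ A, ¬e.IsDiag) (v : V)
    [Fintype ((fromEdgeSet (A : Set (Sym2 V))).neighborSet v)] :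
    (fromEdgeSet (A : Set (Sym2 V))).degree v = edgeDeg A v := by
  rw [← card_incidenceFinset_eq_degree, incidenceFinset_eq_filter]
  congr 2
  ext e
  simp only [mem_edgeFinset, edgeSet_fromEdgeSet, Set.mem_sdiff, mem_coe, Sym2.mem_diagSet]
  exact ⟨And.left, fun he => ⟨he, hA e he⟩⟩

theorem exists_factor_or_isBarrier [Fintype V] (G : SimpleGraph V) (f : V → ℕ) :
    (∃ F : SimpleGraph V, F ≤ G ∧ ∀ v, f v ≤ F.degree v ∧ F.degree v ≤ f v + 1) ∨
      ∃ S T, G.IsBarrier f S T := by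
  obtain ⟨A, hA, hmin⟩ : ∃ A, IsPartialFactor G f A ∧
      ∀ B, IsPartialFactor G f B → deficiency f A ≤ deficiency f B := by
    obtain ⟨A, hA, hmin⟩ := ({A | IsPartialFactor G f A} : Finset (Finset (Sym2 V))).exists_min_image
      (deficiency f) ⟨∅, mem_filter.2 ⟨mem_univ _, by simp [IsPartialFactor, edgeDeg]⟩⟩
    exact ⟨A, (mem_filter.1 hA).2, fun B hB => hmin B (mem_filter.2 ⟨mem_univ B, hB⟩)⟩
  by_cases hcov : ∀ v, f v ≤ edgeDeg A v
  · have hdiag : ∀ e ∈ A, ¬e.IsDiag := fun e he => G.not_isDiag_of_mem_edgeSet (hA.1 he)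
    refine .inl ⟨fromEdgeSet A, (fromEdgeSet_le G).2 (Set.sdiff_subset.trans hA.1), fun v => ?_⟩
    rw [degree_fromEdgeSet hdiag]
    exact ⟨hcov v, hA.2 v⟩
  · push Not at hcov
    obtain ⟨u, hu⟩ := hcov
    exact .inr (exists_isBarrier_of_deficiency_minimal hA hmin hu)

end SimpleGraph

/-- every `f(f+1)`-iso-tough graph admits an `(f, f+1)`-factor: if
`∑_{v isolated in G−S} f(v)(f(v)+1) ≤ |S|` for all `S ⊆ V(G)`, then `G` has a spanning
subgraph `F` with `f(v) ≤ d_F(v) ≤ f(v)+1` for all `v`. -/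
theorem ff1_factor_of_iso_tough {V : Type*} [Fintype V] (G : SimpleGraph V) (f : V → ℕ)
    (hiso : ∀ S : Finset V,
      ∑ v ∈ Finset.univ.filter (fun v => v ∈ G.isoVerts S), f v * (f v + 1) ≤ S.card) :
    ∃ F : SimpleGraph V, F ≤ G ∧ ∀ v, f v ≤ F.degree v ∧ F.degree v ≤ f v + 1 :=
  (G.exists_factor_or_isBarrier f).resolve_right fun ⟨S, T, hST⟩ =>
    SimpleGraph.IsIsoTough.not_isBarrier hiso S T hST
end

section
/- Let P be the graph obtained from the Petersen graph by replacing each vertex with a clique K_{h+1} (joining the three edges at each original vertex to distinct vertices of the corresponding clique, keeping the graph 3-connected). Then P has no spanning Eulerian subgraph (no connected spanning subgraph with all even degrees). -/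
set_option maxRecDepth 10000

open Classical Finset

/-- The vertices of the Petersen graph, realized as the Kneser graph `K(5,2)`:
the 2-element subsets of a 5-element set. -/
def PetersenVert : Type := {s : Finset (Fin 5) // s.card = 2}

/-- Adjacency in the Petersen graph: two 2-subsets are adjacent iff they are disjoint. -/
def petersenAdj (u v : PetersenVert) : Prop := Disjoint u.1 v.1

noncomputable instance : Fintype PetersenVert := by unfold PetersenVert; infer_instance

instance : DecidableEq PetersenVert := by unfold PetersenVert; infer_instance

instance : DecidableRel petersenAdj := fun u v => by unfold petersenAdj; infer_instance

/-- A 2-element subset of `Fin 5` as a Petersen vertex. -/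
def pv (x y : Fin 5) (hxy : ({x, y} : Finset (Fin 5)).card = 2 := by decide) : PetersenVert :=
  ⟨{x, y}, hxy⟩

/-- Explicit enumeration of the vertices of the Petersen graph. -/
def vert : Fin 10 → PetersenVert :=
  ![pv 0 1, pv 0 2, pv 0 3, pv 0 4, pv 1 2, pv 1 3, pv 1 4, pv 2 3, pv 2 4, pv 3 4]

/-- The 15 edges of the Petersen graph, as pairs of vertex indices. -/
def eOf : Fin 15 → Fin 10 × Fin 10 :=
  ![(0,7),(0,8),(0,9),(1,5),(1,6),(1,9),(2,4),(2,6),(2,8),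
    (3,4),(3,5),(3,7),(4,9),(5,8),(6,7)]

/-- The 15 edges of the Petersen graph, as pairs of Petersen vertices. -/
def pEdges (i : Fin 15) : PetersenVert × PetersenVert := (vert (eOf i).1, vert (eOf i).2)

lemma vert_inj : ∀ i j : Fin 10, vert i = vert j → i = j := by decide

lemma pEdges_complete : ∀ u v : PetersenVert, petersenAdj u v →
    ∃ i, pEdges i = (u, v) ∨ pEdges i = (v, u) := by decide

lemma pEdges_unique : ∀ i j : Fin 15,
    (((pEdges i).1 = (pEdges j).1 ∧ (pEdges i).2 = (pEdges j).2) ∨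
     ((pEdges i).1 = (pEdges j).2 ∧ (pEdges i).2 = (pEdges j).1)) → i = j := by decide

/-- For each vertex index, the three indices of the edges incident to it. -/
def tri : Fin 10 → Fin 15 × Fin 15 × Fin 15 :=
  ![(0,1,2),(3,4,5),(6,7,8),(9,10,11),(6,9,12),(3,10,13),(4,7,14),(0,11,14),(1,8,13),(2,5,12)]

lemma tri_spec : ∀ (v : Fin 10) (i : Fin 15),
    ((eOf i).1 = v ∨ (eOf i).2 = v) ↔ (i = (tri v).1 ∨ i = (tri v).2.1 ∨ i = (tri v).2.2) := by
  decide

lemma tri_ne : ∀ v : Fin 10,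
    (tri v).1 ≠ (tri v).2.1 ∧ (tri v).1 ≠ (tri v).2.2 ∧ (tri v).2.1 ≠ (tri v).2.2 := by decide

/-- Parity check of the three edges at each vertex, on the bitmask `n`. -/
def evenOK (n : ℕ) : Bool :=
  ((n>>>0 + n>>>1 + n>>>2) % 2 == 0) &&
  ((n>>>3 + n>>>4 + n>>>5) % 2 == 0) &&
  ((n>>>6 + n>>>7 + n>>>8) % 2 == 0) &&
  ((n>>>9 + n>>>10 + n>>>11) % 2 == 0) &&
  ((n>>>6 + n>>>9 + n>>>12) % 2 == 0) &&
  ((n>>>3 + n>>>10 + n>>>13) % 2 == 0) &&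
  ((n>>>4 + n>>>7 + n>>>14) % 2 == 0) &&
  ((n>>>0 + n>>>11 + n>>>14) % 2 == 0) &&
  ((n>>>1 + n>>>8 + n>>>13) % 2 == 0) &&
  ((n>>>2 + n>>>5 + n>>>12) % 2 == 0)

/-- The subset of edges encoded by the bitmask `n`. -/
def sOf (n : ℕ) : Finset (Fin 15) := univ.filter (fun i => n.testBit i.val)

/-- The finite core statement: any even set of edges of the Petersen graph admits
a "disconnection certificate". -/
def CoreP (n : ℕ) : Prop :=
  evenOK n = true →
    ∃ A : Finset (Fin 10), A.Nonempty ∧ A ≠ Finset.univ ∧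
      ∀ i ∈ sOf n, ((eOf i).1 ∈ A ↔ (eOf i).2 ∈ A)

instance (n : ℕ) : Decidable (CoreP n) := by unfold CoreP; infer_instance

set_option maxHeartbeats 4000000 in
lemma pCoreChunk : ∀ x y z : Fin 32, CoreP (x.val * 1024 + y.val * 32 + z.val) := by decide

/-- Encode the first `k` values of `f` as the low bits of a natural number. -/
def encAux : (ℕ → Bool) → ℕ → ℕ
  | _, 0 => 0
  | f, (k+1) => Nat.bit (f 0) (encAux (fun j => f (j+1)) k)

lemma encAux_lt : ∀ (k : ℕ) (f : ℕ → Bool), encAux f k < 2 ^ k := by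
  intro k
  induction k with
  | zero => intro f; simp [encAux]
  | succ k ih =>
    intro f
    have := ih (fun j => f (j+1))
    have h2 : (2:ℕ) ^ (k+1) = 2 * 2 ^ k := by ring
    cases hb : f 0 <;> simp [encAux, hb, Nat.bit] <;> omega

lemma encAux_testBit : ∀ (k : ℕ) (f : ℕ → Bool) (j : ℕ),
    (encAux f k).testBit j = (decide (j < k) && f j) := by
  intro k
  induction k with
  | zero => intro f j; simp [encAux, Nat.zero_testBit]
  | succ k ih =>
    intro f j
    cases j with
    | zero => simp [encAux, Nat.testBit_bit_zero]
    | succ j =>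
      rw [encAux, Nat.testBit_bit_succ, ih]
      simp [Nat.succ_lt_succ_iff]

lemma card_filter_triple (s : Finset (Fin 15)) (a b c : Fin 15)
    (hab : a ≠ b) (hac : a ≠ c) (hbc : b ≠ c) :
    (s.filter (fun i => i = a ∨ i = b ∨ i = c)).card
      = (if a ∈ s then 1 else 0) + (if b ∈ s then 1 else 0) + (if c ∈ s then 1 else 0) := by
  rw [Finset.card_filter]
  have hpt : ∀ i ∈ s, (if (i = a ∨ i = b ∨ i = c) then (1:ℕ) else 0)
      = (if i = a then 1 else 0) + ((if i = b then 1 else 0) + (if i = c then 1 else 0)) := by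
    intro i _
    by_cases h1 : i = a <;> by_cases h2 : i = b <;> by_cases h3 : i = c <;> simp_all
  rw [Finset.sum_congr rfl hpt, Finset.sum_add_distrib, Finset.sum_add_distrib,
      Finset.sum_ite_eq' s a, Finset.sum_ite_eq' s b, Finset.sum_ite_eq' s c]
  ring

/-- The core combinatorial fact, for arbitrary edge subsets. -/
lemma pCore (s : Finset (Fin 15))
    (hev : ∀ v : Fin 10, Even ((s.filter (fun i => (eOf i).1 = v ∨ (eOf i).2 = v)).card)) :
    ∃ A : Finset (Fin 10), A.Nonempty ∧ A ≠ Finset.univ ∧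
      ∀ i ∈ s, ((eOf i).1 ∈ A ↔ (eOf i).2 ∈ A) := by
  set f : ℕ → Bool := fun j => if hj : j < 15 then decide ((⟨j, hj⟩ : Fin 15) ∈ s) else false
    with hf
  set n : ℕ := encAux f 15 with hn
  have hbit : ∀ i : Fin 15, n.testBit i.val = decide (i ∈ s) := by
    intro i
    rw [hn, encAux_testBit]
    simp [hf, i.isLt]
  have hsof : sOf n = s := by
    ext i
    simp only [sOf, Finset.mem_filter, Finset.mem_univ, true_and, hbit, decide_eq_true_eq]
  have hlt : n < 32768 := by
    have := encAux_lt 15 f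
    norm_num at this
    omega
  have hmod : ∀ i : Fin 15, n >>> (i : ℕ) % 2 = if i ∈ s then 1 else 0 := by
    intro i
    have hb := hbit i
    rw [Nat.testBit_eq_decide_div_mod_eq] at hb
    rw [Nat.shiftRight_eq_div_pow]
    have hlt2 : n / 2 ^ (i : ℕ) % 2 < 2 := Nat.mod_lt _ (by norm_num)
    by_cases h : i ∈ s <;> simp [h] at hb <;> simp [h] <;> omega
  have hclause : ∀ v : Fin 10,
      (n >>> ((tri v).1 : ℕ) + n >>> ((tri v).2.1 : ℕ) + n >>> ((tri v).2.2 : ℕ)) % 2 = 0 := by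
    intro v
    obtain ⟨h1, h2, h3⟩ := tri_ne v
    have hv := hev v
    have hEq : s.filter (fun i => (eOf i).1 = v ∨ (eOf i).2 = v)
        = s.filter (fun i => i = (tri v).1 ∨ i = (tri v).2.1 ∨ i = (tri v).2.2) :=
      Finset.filter_congr (fun i _ => by rw [tri_spec])
    rw [hEq, card_filter_triple s _ _ _ h1 h2 h3, Nat.even_iff] at hv
    have m1 := hmod (tri v).1
    have m2 := hmod (tri v).2.1
    have m3 := hmod (tri v).2.2
    by_cases hm1 : (tri v).1 ∈ s <;> by_cases hm2 : (tri v).2.1 ∈ s <;>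
      by_cases hm3 : (tri v).2.2 ∈ s <;>
      simp [hm1, hm2, hm3] at m1 m2 m3 hv <;> omega
  have hOK : evenOK n = true := by
    have h0 : (n >>> 0 + n >>> 1 + n >>> 2) % 2 = 0 := hclause 0
    have h1 : (n >>> 3 + n >>> 4 + n >>> 5) % 2 = 0 := hclause 1
    have h2 : (n >>> 6 + n >>> 7 + n >>> 8) % 2 = 0 := hclause 2
    have h3 : (n >>> 9 + n >>> 10 + n >>> 11) % 2 = 0 := hclause 3
    have h4 : (n >>> 6 + n >>> 9 + n >>> 12) % 2 = 0 := hclause 4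
    have h5 : (n >>> 3 + n >>> 10 + n >>> 13) % 2 = 0 := hclause 5
    have h6 : (n >>> 4 + n >>> 7 + n >>> 14) % 2 = 0 := hclause 6
    have h7 : (n >>> 0 + n >>> 11 + n >>> 14) % 2 = 0 := hclause 7
    have h8 : (n >>> 1 + n >>> 8 + n >>> 13) % 2 = 0 := hclause 8
    have h9 : (n >>> 2 + n >>> 5 + n >>> 12) % 2 = 0 := hclause 9
    simp only [Nat.shiftRight_zero] at h0 h7
    simp [evenOK, h0, h1, h2, h3, h4, h5, h6, h7, h8, h9]
  have hdecomp : n = (n / 1024) * 1024 + (n % 1024 / 32) * 32 + n % 32 := by omega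
  have hcore := pCoreChunk ⟨n / 1024, by omega⟩ ⟨n % 1024 / 32, by omega⟩ ⟨n % 32, by omega⟩
  rw [CoreP] at hcore
  simp only at hcore
  rw [← hdecomp] at hcore
  obtain ⟨A, hA1, hA2, hA3⟩ := hcore hOK
  exact ⟨A, hA1, hA2, by rw [← hsof]; exact hA3⟩

lemma walk_cross {V : Type*} (Q : SimpleGraph V) (A : Finset V) :
    ∀ {u w : V} (_ : Q.Walk u w), u ∈ A → w ∉ A →
      ∃ c d, Q.Adj c d ∧ c ∈ A ∧ d ∉ A := by
  intro u w p
  induction p with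
  | nil => intro h1 h2; exact absurd h1 h2
  | @cons u v w h p ih =>
    intro h1 h2
    by_cases hv : v ∈ A
    · exact ih hv h2
    · exact ⟨u, v, h, h1, hv⟩

/-- The Petersen graph has no spanning connected subgraph with all degrees even. -/
lemma petersen_no_eulerian (Q : SimpleGraph PetersenVert)
    (hsub : ∀ u v, Q.Adj u v → petersenAdj u v)
    (hconn : Q.Connected)
    (heven : ∀ u, Even (Q.degree u)) : False := by
  classical
  set s : Finset (Fin 15) := univ.filter (fun i => Q.Adj (pEdges i).1 (pEdges i).2) with hs
  have hmem : ∀ i : Fin 15, i ∈ s ↔ Q.Adj (pEdges i).1 (pEdges i).2 := by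
    intro i; simp [hs]
  have hdeg : ∀ v : Fin 10,
      (s.filter (fun i => (eOf i).1 = v ∨ (eOf i).2 = v)).card = Q.degree (vert v) := by
    intro v
    have hpred : ∀ i ∈ s, (((eOf i).1 = v ∨ (eOf i).2 = v) ↔
        ((pEdges i).1 = vert v ∨ (pEdges i).2 = vert v)) := by
      intro i _
      constructor
      · rintro (hh | hh)
        · exact Or.inl (congrArg vert hh)
        · exact Or.inr (congrArg vert hh)
      · rintro (hh | hh)
        · exact Or.inl (vert_inj _ _ hh)
        · exact Or.inr (vert_inj _ _ hh)
    rw [Finset.filter_congr hpred]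
    show _ = (Q.neighborFinset (vert v)).card
    apply Finset.card_bij
      (fun i _ => if (pEdges i).1 = vert v then (pEdges i).2 else (pEdges i).1)
    · intro i hi
      rw [Finset.mem_filter] at hi
      obtain ⟨his, hinc⟩ := hi
      rw [hmem] at his
      rw [SimpleGraph.mem_neighborFinset]
      by_cases hc : (pEdges i).1 = vert v
      · rw [if_pos hc, ← hc]; exact his
      · rw [if_neg hc]
        rcases hinc with hh | hh
        · exact absurd hh hc
        · rw [← hh]; exact his.symm
    · intro i1 hi1 i2 hi2 heq
      have key : ∀ i, i ∈ s.filter (fun i => (pEdges i).1 = vert v ∨ (pEdges i).2 = vert v) →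
          pEdges i = (vert v, if (pEdges i).1 = vert v then (pEdges i).2 else (pEdges i).1)
          ∨ pEdges i = ((if (pEdges i).1 = vert v then (pEdges i).2 else (pEdges i).1), vert v) := by
        intro i hi
        rw [Finset.mem_filter] at hi
        by_cases hc : (pEdges i).1 = vert v
        · left; rw [if_pos hc, ← hc]
        · right
          rcases hi.2 with hh | hh
          · exact absurd hh hc
          · rw [if_neg hc, ← hh]
      apply pEdges_unique
      rcases key i1 hi1 with e1 | e1 <;> rcases key i2 hi2 with e2 | e2 <;>
        rw [e1, e2, heq] <;> simp
    · intro b hb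
      rw [SimpleGraph.mem_neighborFinset] at hb
      have hbv : vert v ≠ b := Q.ne_of_adj hb
      obtain ⟨i, hi⟩ := pEdges_complete (vert v) b (hsub _ _ hb)
      refine ⟨i, ?_, ?_⟩
      · rw [Finset.mem_filter, hmem]
        rcases hi with hh | hh <;> rw [hh]
        · exact ⟨hb, Or.inl rfl⟩
        · exact ⟨hb.symm, Or.inr rfl⟩
      · rcases hi with hh | hh <;> rw [hh]
        · simp
        · have : b ≠ vert v := fun hc => hbv hc.symm
          simp [this]
  have hev : ∀ v : Fin 10, Even ((s.filter (fun i => (eOf i).1 = v ∨ (eOf i).2 = v)).card) := by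
    intro v; rw [hdeg v]; exact heven _
  obtain ⟨A', hne, hnuniv, hcross⟩ := pCore s hev
  obtain ⟨x, hx⟩ := hne
  have hyex : ∃ y : Fin 10, y ∉ A' := by
    by_contra hc
    push_neg at hc
    exact hnuniv (Finset.eq_univ_iff_forall.2 hc)
  obtain ⟨y, hy⟩ := hyex
  obtain ⟨p⟩ := hconn.preconnected (vert x) (vert y)
  have himg : ∀ j : Fin 10, vert j ∈ A'.image vert ↔ j ∈ A' := by
    intro j
    constructor
    · intro hc
      obtain ⟨z, hz, hz2⟩ := Finset.mem_image.1 hc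
      rwa [← vert_inj _ _ hz2]
    · exact Finset.mem_image_of_mem _
  obtain ⟨c, d, hcd, hcA, hdA⟩ := walk_cross Q (A'.image vert) p
    ((himg x).2 hx) (fun hc => hy ((himg y).1 hc))
  obtain ⟨i, hi⟩ := pEdges_complete c d (hsub _ _ hcd)
  have his : i ∈ s := by
    rw [hmem]
    rcases hi with hh | hh <;> rw [hh]
    · exact hcd
    · exact hcd.symm
  have hiff := hcross i his
  have e1 : vert (eOf i).1 = (pEdges i).1 := rfl
  have e2 : vert (eOf i).2 = (pEdges i).2 := rfl
  rcases hi with hh | hh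
  · have hc1 : (eOf i).1 ∈ A' := by
      rw [← himg, e1, hh]; exact hcA
    have hc2 : (eOf i).2 ∈ A' := hiff.1 hc1
    apply hdA
    have hvd : vert (eOf i).2 = d := by rw [e2, hh]
    rw [← hvd]
    exact (himg (eOf i).2).2 hc2
  · have hc1 : (eOf i).2 ∈ A' := by
      rw [← himg, e2, hh]; exact hcA
    have hc2 : (eOf i).1 ∈ A' := hiff.2 hc1
    apply hdA
    have : vert (eOf i).1 = d := by rw [e1, hh]
    rw [← this]
    exact (himg (eOf i).1).2 hc2

theorem inflated_petersen_no_spanning_eulerian (h : ℕ) (hh : 1 ≤ h)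
    (a : PetersenVert → PetersenVert → Fin (h + 1))
    (P : SimpleGraph (PetersenVert × Fin (h + 1)))
    (hadj : ∀ u v i j, P.Adj (u, i) (v, j) ↔
      (u = v ∧ i ≠ j) ∨ (petersenAdj u v ∧ i = a u v ∧ j = a v u)) :
    ¬ ∃ H : SimpleGraph (PetersenVert × Fin (h + 1)), H ≤ P ∧ H.Connected ∧
      ∀ x, Even (H.degree x) := by
  rintro ⟨H, hle, hconn, heven⟩
  classical
  let Q : SimpleGraph PetersenVert :=
    { Adj := fun u v => u ≠ v ∧ H.Adj (u, a u v) (v, a v u)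
      symm := by
        constructor
        rintro u v ⟨h1, h2⟩
        exact ⟨h1.symm, h2.symm⟩
      loopless := ⟨fun u hu => hu.1 rfl⟩ }
  have hQadj : ∀ u v, Q.Adj u v ↔ (u ≠ v ∧ H.Adj (u, a u v) (v, a v u)) := fun u v => Iff.rfl
  have hQsub : ∀ u v, Q.Adj u v → petersenAdj u v := by
    intro u v hq
    rw [hQadj] at hq
    rcases (hadj u v (a u v) (a v u)).1 (hle hq.2) with ⟨he, _⟩ | ⟨hp, _, _⟩
    · exact absurd he hq.1
    · exact hp
  have hproj : ∀ (x y : PetersenVert × Fin (h+1)), H.Walk x y → Q.Reachable x.1 y.1 := by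
    intro x y p
    induction p with
    | nil => exact SimpleGraph.Reachable.refl _
    | @cons x z y hxz p ih =>
      refine SimpleGraph.Reachable.trans ?_ ih
      by_cases hv : x.1 = z.1
      · rw [hv]
      · have hP : P.Adj (x.1, x.2) (z.1, z.2) := hle hxz
        rcases (hadj x.1 z.1 x.2 z.2).1 hP with ⟨he, _⟩ | ⟨_, h1, h2⟩
        · exact absurd he hv
        · refine SimpleGraph.Adj.reachable ?_
          rw [hQadj]
          refine ⟨hv, ?_⟩
          rw [← h1, ← h2]
          exact hxz
  have hQconn : Q.Connected := by
    have hnon : Nonempty PetersenVert := ⟨pv 0 1⟩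
    refine ⟨fun u v => ?_⟩
    obtain ⟨p⟩ := hconn.preconnected (u, (0 : Fin (h+1))) (v, (0 : Fin (h+1)))
    exact hproj _ _ p
  have hQeven : ∀ u, Even (Q.degree u) := by
    intro u
    set F : Finset (Fin (h+1) × (PetersenVert × Fin (h+1))) :=
      univ.filter (fun p => H.Adj (u, p.1) p.2) with hF
    have hmemF : ∀ p, p ∈ F ↔ H.Adj (u, p.1) p.2 := by intro p; simp [hF]
    have hcardF : F.card = ∑ i : Fin (h+1), H.degree (u, i) := by
      rw [Finset.card_eq_sum_card_fiberwise (f := fun p => p.1) (t := univ)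
        (fun x _ => mem_univ _)]
      refine Finset.sum_congr rfl (fun i _ => ?_)
      show _ = (H.neighborFinset (u, i)).card
      apply Finset.card_bij (fun p _ => p.2)
      · intro p hp
        rw [Finset.mem_filter, hmemF] at hp
        rw [SimpleGraph.mem_neighborFinset, ← hp.2]
        exact hp.1
      · intro p1 hp1 p2 hp2 heq
        rw [Finset.mem_filter] at hp1 hp2
        exact Prod.ext (hp1.2.trans hp2.2.symm) heq
      · intro w hw
        rw [SimpleGraph.mem_neighborFinset] at hw
        exact ⟨(i, w), by rw [Finset.mem_filter, hmemF]; exact ⟨hw, rfl⟩, rfl⟩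
    have hevF : Even F.card := by
      rw [hcardF]
      exact Finset.even_sum _ (fun i _ => heven (u, i))
    have hsplit := Finset.card_filter_add_card_filter_not
      (s := F) (p := fun p => p.2.1 = u)
    set F1 := F.filter (fun p => p.2.1 = u) with hF1d
    set F2 := F.filter (fun p => ¬ p.2.1 = u) with hF2d
    let G : SimpleGraph (Fin (h+1)) :=
      { Adj := fun i j => H.Adj (u, i) (u, j)
        symm := ⟨fun i j hij => hij.symm⟩
        loopless := ⟨fun i hi => H.loopless.irrefl _ hi⟩ }
    have hcardF1 : F1.card = ∑ i : Fin (h+1), G.degree i := by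
      rw [Finset.card_eq_sum_card_fiberwise (f := fun p => p.1) (t := univ)
        (fun x _ => mem_univ _)]
      refine Finset.sum_congr rfl (fun i _ => ?_)
      show _ = (G.neighborFinset i).card
      apply Finset.card_bij (fun p _ => p.2.2)
      · intro p hp
        rw [Finset.mem_filter] at hp
        obtain ⟨hp1, hp2⟩ := hp
        rw [hF1d, Finset.mem_filter, hmemF] at hp1
        rw [SimpleGraph.mem_neighborFinset]
        show H.Adj (u, i) (u, p.2.2)
        have : p.2 = (u, p.2.2) := by
          rw [← hp1.2]
        rw [← hp2, ← this]
        exact hp1.1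
      · intro p1 hp1 p2 hp2 heq
        rw [Finset.mem_filter] at hp1 hp2
        have h11 : p1.2.1 = u := by
          have := hp1.1; rw [hF1d, Finset.mem_filter] at this; exact this.2
        have h21 : p2.2.1 = u := by
          have := hp2.1; rw [hF1d, Finset.mem_filter] at this; exact this.2
        refine Prod.ext (hp1.2.trans hp2.2.symm) (Prod.ext (h11.trans h21.symm) heq)
      · intro j hj
        rw [SimpleGraph.mem_neighborFinset] at hj
        refine ⟨(i, (u, j)), ?_, rfl⟩
        rw [Finset.mem_filter, hF1d, Finset.mem_filter, hmemF]
        exact ⟨⟨hj, rfl⟩, rfl⟩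
    have hevF1 : Even F1.card := by
      rw [hcardF1, SimpleGraph.sum_degrees_eq_twice_card_edges]
      exact ⟨_, two_mul _⟩
    have hcardF2 : F2.card = Q.degree u := by
      show _ = (Q.neighborFinset u).card
      apply Finset.card_bij (fun p _ => p.2.1)
      · intro p hp
        rw [hF2d, Finset.mem_filter, hmemF] at hp
        obtain ⟨hp1, hp2⟩ := hp
        rcases (hadj u p.2.1 p.1 p.2.2).1 (hle hp1) with ⟨he, _⟩ | ⟨hpet, h1, h2⟩
        · exact absurd he.symm hp2
        · rw [SimpleGraph.mem_neighborFinset, hQadj]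
          refine ⟨fun hc => hp2 hc.symm, ?_⟩
          rw [← h1, ← h2]
          exact hp1
      · intro p1 hp1 p2 hp2 heq
        rw [hF2d, Finset.mem_filter, hmemF] at hp1 hp2
        rcases (hadj u p1.2.1 p1.1 p1.2.2).1 (hle hp1.1) with ⟨he, _⟩ | ⟨_, h11, h12⟩
        · exact absurd he.symm hp1.2
        rcases (hadj u p2.2.1 p2.1 p2.2.2).1 (hle hp2.1) with ⟨he, _⟩ | ⟨_, h21, h22⟩
        · exact absurd he.symm hp2.2
        refine Prod.ext ?_ (Prod.ext heq ?_)
        · rw [h11, h21, heq]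
        · rw [h12, h22, heq]
      · intro w hw
        rw [SimpleGraph.mem_neighborFinset, hQadj] at hw
        refine ⟨(a u w, (w, a w u)), ?_, rfl⟩
        rw [hF2d, Finset.mem_filter, hmemF]
        exact ⟨hw.2, fun hc => hw.1 hc.symm⟩
    rw [Nat.even_iff] at hevF hevF1 ⊢
    rw [← hcardF2]
    omega
  apply petersen_no_eulerian Q hQsub hQconn
  intro u
  convert hQeven u using 2
end
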